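/- Let U_L and U_hat_L be d x L matrices with orthonormal columns, and set O = U_hat_L^T U_L. Then ||U_hat_L O - U_L||_2 = ||U_L^T U_hat_L_perp||_2, where U_hat_L_perp is a d x (d-L) matrix whose columns form an orthonormal basis of span(U_hat_L)^perp. In particular, ||U_hat_L O - U_L||_2^2 = ||U_L^T (I - U_hat_L U_hat_L^T) U_L||_2. -/

import Mathlib

/-!
Since `Uh Uhᵀ + Uhp Uhpᵀ = I`, the residual is `Uh Uhᵀ U - U = -Uhp (Uhpᵀ U)`, and left
multiplication by `Uhp`, which has orthonormal columns, preserves the spectral norm. Hence the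
residual has norm `‖Uhpᵀ U‖ = ‖Uᵀ Uhp‖`, and by the C⋆-identity its square is
`‖Uᵀ Uhp Uhpᵀ U‖ = ‖Uᵀ (I - Uh Uhᵀ) U‖`.
-/

open Matrix

/-- Spectral norm of a real matrix: operator norm w.r.t. Euclidean norms. -/
noncomputable def specNorm {m n : ℕ} (M : Matrix (Fin m) (Fin n) ℝ) : ℝ :=
  ‖LinearMap.toContinuousLinearMap (Matrix.toEuclideanLin M)‖

open scoped Matrix.Norms.L2Operator

lemma specNorm_eq_l2_opNorm {m n : ℕ} (M : Matrix (Fin m) (Fin n) ℝ) : specNorm M = ‖M‖ :=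
  (l2_opNorm_def M).symm

namespace Matrix

lemma mul_sub_self_eq_neg_of_add_eq_one {R m n : Type*} [Ring R] [Fintype n] [DecidableEq n]
    {P Q : Matrix n n R} (h : P + Q = 1) (X : Matrix n m R) : P * X - X = -(Q * X) := by
  rw [eq_sub_of_add_eq h, Matrix.sub_mul, Matrix.one_mul]
  abel

variable {𝕜 m n l : Type*} [RCLike 𝕜] [Fintype m] [Fintype n] [DecidableEq n]
  [Fintype l] [DecidableEq l]

lemma l2_opNorm_mul_of_conjTranspose_mul_self_eq_one {V : Matrix m n 𝕜} (hV : Vᴴ * V = 1)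
    (B : Matrix n l 𝕜) : ‖V * B‖ = ‖B‖ := by
  have hgram : (V * B)ᴴ * (V * B) = Bᴴ * B := by
    rw [conjTranspose_mul, Matrix.mul_assoc, ← Matrix.mul_assoc Vᴴ, hV, Matrix.one_mul]
  have hsq : ‖V * B‖ * ‖V * B‖ = ‖B‖ * ‖B‖ := by
    rw [← l2_opNorm_conjTranspose_mul_self, hgram, l2_opNorm_conjTranspose_mul_self]
  exact (mul_self_inj (norm_nonneg _) (norm_nonneg _)).mp hsq

end Matrix

theorem stmt18_general {d L : ℕ}
    (U Uh : Matrix (Fin d) (Fin L) ℝ)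
    (Uhp : Matrix (Fin d) (Fin (d - L)) ℝ) (hUhp : Uhpᵀ * Uhp = 1)
    (hspan : Uh * Uhᵀ + Uhp * Uhpᵀ = 1)
    (O : Matrix (Fin L) (Fin L) ℝ) (hO : O = Uhᵀ * U) :
    specNorm (Uh * O - U) = specNorm (Uᵀ * Uhp) ∧
      specNorm (Uh * O - U) ^ 2 = specNorm (Uᵀ * (1 - Uh * Uhᵀ) * U) := by
  have hresidual : Uh * O - U = -(Uhp * (Uhpᵀ * U)) := by
    rw [hO, ← Matrix.mul_assoc, ← Matrix.mul_assoc]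
    exact mul_sub_self_eq_neg_of_add_eq_one hspan U
  have hnorm : ‖Uh * O - U‖ = ‖Uhpᵀ * U‖ := by
    rw [hresidual, norm_neg, l2_opNorm_mul_of_conjTranspose_mul_self_eq_one]
    rwa [conjTranspose_eq_transpose_of_trivial]
  have hcompl : 1 - Uh * Uhᵀ = Uhp * Uhpᵀ := eq_sub_of_add_eq' hspan |>.symm
  simp only [specNorm_eq_l2_opNorm, hnorm]
  constructor
  · rw [← l2_opNorm_conjTranspose, conjTranspose_eq_transpose_of_trivial, transpose_mul,
      transpose_transpose]
  · rw [sq, ← l2_opNorm_conjTranspose_mul_self, conjTranspose_eq_transpose_of_trivial,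
      transpose_mul, transpose_transpose, hcompl, Matrix.mul_assoc, Matrix.mul_assoc,
      Matrix.mul_assoc]

theorem stmt18 {d L : ℕ} (hLd : L ≤ d)
    (U Uh : Matrix (Fin d) (Fin L) ℝ) (hU : Uᵀ * U = 1) (hUh : Uhᵀ * Uh = 1)
    (Uhp : Matrix (Fin d) (Fin (d - L)) ℝ) (hUhp : Uhpᵀ * Uhp = 1)
    (hperp : Uhᵀ * Uhp = 0) (hspan : Uh * Uhᵀ + Uhp * Uhpᵀ = 1)
    (O : Matrix (Fin L) (Fin L) ℝ) (hO : O = Uhᵀ * U) :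
    specNorm (Uh * O - U) = specNorm (Uᵀ * Uhp) ∧
      specNorm (Uh * O - U) ^ 2 = specNorm (Uᵀ * (1 - Uh * Uhᵀ) * U) :=
  stmt18_general U Uh Uhp hUhp hspan O hO
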